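/- arXiv:2210.05382 — 5 statements merged into one kernel-verified Lean document; each statement's English description precedes it below -/
import Mathlib

section
/- The Shrikhande graph is strongly regular with parameters (16, 6, 2, 2): its vertex type has cardinality 16, it is 6-regular, every pair of adjacent vertices has exactly 2 common neighbors, and every pair of distinct non-adjacent vertices has exactly 2 common neighbors. -/
/-- The connection set of the Shrikhande graph. -/
def shrikhandeSet : Finset (ZMod 4 × ZMod 4) :=
  {(1, 0), (3, 0), (0, 1), (0, 3), (1, 1), (3, 3)}

/-- The Shrikhande graph on `ZMod 4 × ZMod 4`: `u` and `v` are adjacent iff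
`u - v` lies in the set {(1,0),(3,0),(0,1),(0,3),(1,1),(3,3)}. -/
def shrikhandeGraph : SimpleGraph (ZMod 4 × ZMod 4) where
  Adj u v := u - v ∈ shrikhandeSet
  symm := by
    constructor
    intro u v h
    have key : ∀ w : ZMod 4 × ZMod 4, w ∈ shrikhandeSet → -w ∈ shrikhandeSet := by decide
    have := key _ h
    rwa [neg_sub] at this
  loopless := by
    constructor
    intro u h
    beta_reduce at h
    rw [sub_self] at h
    revert h
    decide

instance : DecidableRel shrikhandeGraph.Adj := fun u v =>
  decidable_of_iff (u - v ∈ shrikhandeSet) Iff.rfl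

/-!
Adjacency in the Shrikhande graph depends only on the difference of the endpoints, so the
common neighbours `w` of `u` and `v` correspond, via `s = u - w`, to the `s ∈ S` with
`(v - u) + s ∈ S`. The connection set `S` is a `(16, 6, 2)` difference set in `ZMod 4 × ZMod 4`:
every nonzero element is a difference of two elements of `S` in exactly two ways. Hence any two
distinct vertices, adjacent or not, have exactly two common neighbours.
-/

open Finset

namespace SimpleGraph

variable {A : Type*} [AddGroup A] [Fintype A] {G : SimpleGraph A} [DecidableRel G.Adj]
  {S : Finset A}

theorem degree_eq_card_of_adj_iff_sub_mem (hG : ∀ u v, G.Adj u v ↔ u - v ∈ S) (u : A) :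
    G.degree u = #S := by
  rw [← card_neighborFinset_eq_degree]
  refine card_nbij' (u - ·) (-· + u) ?_ ?_ ?_ ?_ <;> intro w hw
  all_goals simp_all [sub_eq_add_neg]

theorem card_commonNeighbors_of_adj_iff_sub_mem [DecidableEq A]
    (hG : ∀ u v, G.Adj u v ↔ u - v ∈ S) (u v : A) :
    Fintype.card (G.commonNeighbors u v) = #{s ∈ S | v - u + s ∈ S} := by
  rw [← Set.toFinset_card]
  refine card_nbij' (u - ·) (-· + u) ?_ ?_ ?_ ?_ <;> intro w hw
  all_goals simp_all [mem_commonNeighbors, sub_eq_add_neg, add_assoc]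

theorem isSRGWith_of_adj_iff_sub_mem [DecidableEq A] (hG : ∀ u v, G.Adj u v ↔ u - v ∈ S)
    {ℓ : ℕ} (hS : ∀ d ≠ 0, #{s ∈ S | d + s ∈ S} = ℓ) :
    G.IsSRGWith (Fintype.card A) #S ℓ ℓ where
  card := rfl
  regular := degree_eq_card_of_adj_iff_sub_mem hG
  of_adj u v huv := by
    rw [card_commonNeighbors_of_adj_iff_sub_mem hG]
    exact hS _ (sub_ne_zero.2 huv.ne')
  of_not_adj u v huv _ := by
    rw [card_commonNeighbors_of_adj_iff_sub_mem hG]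
    exact hS _ (sub_ne_zero.2 huv.symm)

end SimpleGraph

theorem card_filter_add_mem_shrikhandeSet {d : ZMod 4 × ZMod 4} (hd : d ≠ 0) :
    #{s ∈ shrikhandeSet | d + s ∈ shrikhandeSet} = 2 := by
  revert d
  decide

/-- The Shrikhande graph is strongly regular with parameters (16, 6, 2, 2). -/
theorem shrikhandeGraph_isSRGWith : shrikhandeGraph.IsSRGWith 16 6 2 2 :=
  SimpleGraph.isSRGWith_of_adj_iff_sub_mem (fun _ _ => Iff.rfl)
    (fun _ => card_filter_add_mem_shrikhandeSet)
end

section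
/- For real numbers μ1 < μ2 and σ > 0, the overlap of the two equal-variance Gaussian densities equals the optimal misclassification rate: ∫ x, min (gaussianPDFReal μ1 σ² x) (gaussianPDFReal μ2 σ² x) = 2·Φ(−(μ2−μ1)/(2σ)), where the integral is over ℝ with respect to Lebesgue measure. -/
/-! The densities cross at the midpoint `m = (μ1 + μ2) / 2`: left of `m` the minimum is the
density centred at `μ2`, right of `m` the one centred at `μ1`. Reflection in `m` exchanges the
two Gaussians, so both pieces equal `P(N(μ2, σ²) ≤ m) = Φ(-(μ2 - μ1) / (2σ))`. -/

open MeasureTheory ProbabilityTheory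
open scoped NNReal

/-- The standard normal CDF. -/
noncomputable def stdNormalCDF (x : ℝ) : ℝ := ((gaussianReal 0 1) (Set.Iic x)).toReal

open Set

section GaussianPDF

variable {μ1 μ2 : ℝ} {v : ℝ≥0} {x : ℝ}

lemma gaussianPDFReal_le_gaussianPDFReal_of_sq_le (hx : (x - μ2) ^ 2 ≤ (x - μ1) ^ 2) :
    gaussianPDFReal μ1 v x ≤ gaussianPDFReal μ2 v x := by
  unfold gaussianPDFReal
  gcongr

lemma min_gaussianPDFReal_eq_right (hμ : μ1 ≤ μ2) (hx : x ≤ (μ1 + μ2) / 2) :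
    min (gaussianPDFReal μ1 v x) (gaussianPDFReal μ2 v x) = gaussianPDFReal μ2 v x :=
  min_eq_right <| gaussianPDFReal_le_gaussianPDFReal_of_sq_le <| by nlinarith

lemma min_gaussianPDFReal_eq_left (hμ : μ1 ≤ μ2) (hx : (μ1 + μ2) / 2 ≤ x) :
    min (gaussianPDFReal μ1 v x) (gaussianPDFReal μ2 v x) = gaussianPDFReal μ1 v x :=
  min_eq_left <| gaussianPDFReal_le_gaussianPDFReal_of_sq_le <| by nlinarith

lemma setIntegral_gaussianPDFReal (μ : ℝ) (hv : v ≠ 0) (s : Set ℝ) :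
    ∫ x in s, gaussianPDFReal μ v x = (gaussianReal μ v s).toReal := by
  rw [gaussianReal_apply_eq_integral μ hv s,
    ENNReal.toReal_ofReal (integral_nonneg (gaussianPDFReal_nonneg μ v))]

end GaussianPDF

lemma gaussianReal_Ioi_eq_Iic_reflect (μ : ℝ) {v : ℝ≥0} (hv : v ≠ 0) (x : ℝ) :
    gaussianReal μ v (Ioi x) = gaussianReal (2 * x - μ) v (Iic x) := by
  have : NullSingletonClass (gaussianReal (2 * x - μ) v) := nullSingletonClass_gaussianReal hv
  have hpre : (2 * x - ·) ⁻¹' Iio x = Ioi x := by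
    ext y
    simp only [mem_preimage, mem_Iio, mem_Ioi]
    constructor <;> intro <;> linarith
  rw [← measure_congr Iio_ae_eq_Iic, ← gaussianReal_map_const_sub,
    Measure.map_apply (by fun_prop) measurableSet_Iio, hpre]

lemma gaussianReal_map_standardize (μ : ℝ) {σ : ℝ} (hσ : σ ≠ 0) :
    (gaussianReal μ (σ ^ 2).toNNReal).map (fun x ↦ (x - μ) / σ) = gaussianReal 0 1 := by
  have hcomp : (fun x ↦ (x - μ) / σ) = (· / σ) ∘ (· - μ) := rfl
  rw [hcomp, ← Measure.map_map (by fun_prop) (by fun_prop), gaussianReal_map_sub_const,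
    gaussianReal_map_div_const, sub_self, zero_div]
  congr 1
  ext
  simp [Real.toNNReal_of_nonneg (sq_nonneg σ), hσ]

lemma gaussianReal_Iic_eq_stdNormalCDF (μ : ℝ) {σ : ℝ} (hσ : 0 < σ) (x : ℝ) :
    (gaussianReal μ (σ ^ 2).toNNReal (Iic x)).toReal = stdNormalCDF ((x - μ) / σ) := by
  have hpre : (fun y ↦ (y - μ) / σ) ⁻¹' Iic ((x - μ) / σ) = Iic x := by
    ext y
    simp only [mem_preimage, mem_Iic]
    rw [div_le_div_iff_of_pos_right hσ, sub_le_sub_iff_right]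
  rw [stdNormalCDF, ← gaussianReal_map_standardize μ hσ.ne',
    Measure.map_apply (by fun_prop) measurableSet_Iic, hpre]

/-- The overlap of two equal-variance Gaussian densities with means `μ1 < μ2` and standard
deviation `σ > 0` equals the optimal misclassification rate `2·Φ(−(μ2−μ1)/(2σ))`. -/
theorem gaussian_overlap_eq (μ1 μ2 σ : ℝ) (h : μ1 < μ2) (hσ : 0 < σ) :
    ∫ x, min (gaussianPDFReal μ1 ((σ ^ 2).toNNReal) x)
        (gaussianPDFReal μ2 ((σ ^ 2).toNNReal) x)
      = 2 * stdNormalCDF (-(μ2 - μ1) / (2 * σ)) := by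
  set v : ℝ≥0 := (σ ^ 2).toNNReal with hv_def
  have hv : v ≠ 0 := by simpa [hv_def] using hσ.ne'
  set m : ℝ := (μ1 + μ2) / 2 with hm
  have hint : Integrable (fun x ↦ min (gaussianPDFReal μ1 v x) (gaussianPDFReal μ2 v x)) :=
    (integrable_gaussianPDFReal μ1 v).inf (integrable_gaussianPDFReal μ2 v)
  have h_left : ∫ x in Iic m, min (gaussianPDFReal μ1 v x) (gaussianPDFReal μ2 v x)
      = ∫ x in Iic m, gaussianPDFReal μ2 v x :=
    setIntegral_congr_fun measurableSet_Iic fun x hx ↦ min_gaussianPDFReal_eq_right h.le hx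
  have h_right : ∫ x in Ioi m, min (gaussianPDFReal μ1 v x) (gaussianPDFReal μ2 v x)
      = ∫ x in Ioi m, gaussianPDFReal μ1 v x :=
    setIntegral_congr_fun measurableSet_Ioi fun x hx ↦ min_gaussianPDFReal_eq_left h.le hx.le
  have h_reflect : 2 * m - μ1 = μ2 := by rw [hm]; ring
  have h_arg : (m - μ2) / σ = -(μ2 - μ1) / (2 * σ) := by rw [hm]; field_simp; ring
  rw [← integral_add_compl measurableSet_Iic hint, compl_Iic, h_left, h_right,
    setIntegral_gaussianPDFReal μ2 hv, setIntegral_gaussianPDFReal μ1 hv,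
    gaussianReal_Ioi_eq_Iic_reflect μ1 hv, h_reflect, gaussianReal_Iic_eq_stdNormalCDF μ2 hσ, h_arg]
  ring
end

section
/- For real numbers μ1 < μ2, σ > 0, and every integer d ≥ 2: ε(0) = ε(1) = 2·Φ(−√d·(μ2−μ1)/(2σ)) < ε_raw; that is, at homophily 0 and at homophily 1 the misclassification rates after aggregation are equal to each other and strictly smaller than the raw misclassification rate. -/
open MeasureTheory ProbabilityTheory
open scoped NNReal

/-- The aggregated misclassification rate at homophily `h`, for class means `μ1, μ2`,
class standard deviation `σ`, and degree `d`:
`ε(h) = 2·Φ(−|2h−1|·√d·(μ2−μ1)/(2σ))`. -/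
noncomputable def aggErr (μ1 μ2 σ : ℝ) (d : ℕ) (h : ℝ) : ℝ :=
  2 * stdNormalCDF (-(|2 * h - 1| * Real.sqrt d * (μ2 - μ1)) / (2 * σ))

/-- The raw misclassification rate `ε_raw = 2·Φ(−(μ2−μ1)/(2σ))`. -/
noncomputable def rawErr (μ1 μ2 σ : ℝ) : ℝ :=
  2 * stdNormalCDF (-(μ2 - μ1) / (2 * σ))

lemma stdNormalCDF_strictMono : StrictMono stdNormalCDF := by
  intro a b hab
  have hmeas : (gaussianReal 0 1) (Set.Ioc a b) ≠ 0 := by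
    intro h0
    have := ProbabilityTheory.gaussianReal_absolutelyContinuous' 0 (v := 1) one_ne_zero h0
    rw [Real.volume_Ioc] at this
    have hpos : (0:ℝ) < b - a := by linarith
    simp [ENNReal.ofReal_eq_zero, not_le.mpr hpos] at this
  have hsplit : Set.Iic b = Set.Iic a ∪ Set.Ioc a b := (Set.Iic_union_Ioc_eq_Iic hab.le).symm
  have hdisj : Disjoint (Set.Iic a) (Set.Ioc a b) := Set.Iic_disjoint_Ioc le_rfl
  have hadd : (gaussianReal 0 1) (Set.Iic b)
      = (gaussianReal 0 1) (Set.Iic a) + (gaussianReal 0 1) (Set.Ioc a b) := by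
    rw [hsplit]
    exact measure_union hdisj measurableSet_Ioc
  have hfin : ∀ s : Set ℝ, (gaussianReal 0 1) s ≠ ⊤ := fun s => measure_ne_top _ s
  unfold stdNormalCDF
  rw [hadd, ENNReal.toReal_add (hfin _) (hfin _)]
  have : 0 < ((gaussianReal 0 1) (Set.Ioc a b)).toReal :=
    ENNReal.toReal_pos hmeas (hfin _)
  linarith

/-- At homophily 0 and 1, the aggregated misclassification rates are both equal to
`2·Φ(−√d·(μ2−μ1)/(2σ))` and are strictly smaller than the raw misclassification rate. -/
theorem aggErr_zero_one_lt_rawErr (μ1 μ2 σ : ℝ) (h : μ1 < μ2) (hσ : 0 < σ)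
    (d : ℕ) (hd : 2 ≤ d) :
    aggErr μ1 μ2 σ d 0 = 2 * stdNormalCDF (-(Real.sqrt d * (μ2 - μ1)) / (2 * σ)) ∧
    aggErr μ1 μ2 σ d 1 = 2 * stdNormalCDF (-(Real.sqrt d * (μ2 - μ1)) / (2 * σ)) ∧
    2 * stdNormalCDF (-(Real.sqrt d * (μ2 - μ1)) / (2 * σ)) < rawErr μ1 μ2 σ := by
  have h1 : (1:ℝ) < Real.sqrt d := by
    have : (1:ℝ) < (d:ℝ) := by exact_mod_cast lt_of_lt_of_le one_lt_two hd
    calc (1:ℝ) = Real.sqrt 1 := Real.sqrt_one.symm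
    _ < Real.sqrt d := Real.sqrt_lt_sqrt zero_le_one this
  refine ⟨?_, ?_, ?_⟩
  · unfold aggErr; norm_num
  · unfold aggErr; norm_num
  · unfold rawErr
    have harg : -(Real.sqrt d * (μ2 - μ1)) / (2 * σ) < -(μ2 - μ1) / (2 * σ) := by
      exact (div_lt_div_iff_of_pos_right (by positivity)).mpr (by nlinarith)
    have := stdNormalCDF_strictMono harg
    linarith
end

section
/- For real numbers μ1 < μ2, σ > 0, and every integer d ≥ 1, the aggregated misclassification rate ε is strictly monotone increasing on the interval [0, 1/2] and strictly monotone decreasing on the interval [1/2, 1]. -/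
open MeasureTheory ProbabilityTheory
open scoped NNReal

/-- The aggregated misclassification rate is strictly increasing on `[0, 1/2]` and
strictly decreasing on `[1/2, 1]`. -/
theorem aggErr_strictMonoOn_strictAntiOn (μ1 μ2 σ : ℝ) (h : μ1 < μ2) (hσ : 0 < σ)
    (d : ℕ) (hd : 1 ≤ d) :
    StrictMonoOn (aggErr μ1 μ2 σ d) (Set.Icc 0 (1 / 2)) ∧
    StrictAntiOn (aggErr μ1 μ2 σ d) (Set.Icc (1 / 2) 1) := by
  have hsq : 0 < Real.sqrt d := Real.sqrt_pos.mpr (by exact_mod_cast Nat.lt_of_lt_of_le Nat.zero_lt_one hd)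
  have hμ : 0 < μ2 - μ1 := sub_pos.mpr h
  have key : ∀ a b : ℝ, |2 * b - 1| < |2 * a - 1| →
      aggErr μ1 μ2 σ d a < aggErr μ1 μ2 σ d b := by
    intro a b hab
    unfold aggErr
    have hnum : -(|2 * a - 1| * Real.sqrt d * (μ2 - μ1))
        < -(|2 * b - 1| * Real.sqrt d * (μ2 - μ1)) := by
      nlinarith [abs_nonneg (2*b-1), mul_pos hsq hμ]
    have harg : -(|2 * a - 1| * Real.sqrt d * (μ2 - μ1)) / (2 * σ)
        < -(|2 * b - 1| * Real.sqrt d * (μ2 - μ1)) / (2 * σ) :=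
      div_lt_div_of_pos_right hnum (by linarith)
    have := stdNormalCDF_strictMono harg
    linarith
  constructor
  · intro a ha b hb hab
    rw [Set.mem_Icc] at ha hb
    apply key
    rw [abs_of_nonpos (by linarith [ha.2]), abs_of_nonpos (by linarith [hb.2])]
    linarith
  · intro a ha b hb hab
    rw [Set.mem_Icc] at ha hb
    apply key
    rw [abs_of_nonneg (by linarith [ha.1]), abs_of_nonneg (by linarith [hb.1])]
    linarith
end

section
/- (Theorem 2) For real numbers μ1 < μ2, σ > 0, and every integer d ≥ 2, there exist real numbers h_l and h_u with 0 < h_l < 1/2 < h_u < 1 such that for every h with h_l < h < h_u one has ε(h) > ε_raw; that is, there exists a graph homophily range on which the misclassification rate increases after aggregation. -/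
open MeasureTheory ProbabilityTheory
open scoped NNReal

/-- (Theorem 2) There exists a homophily range `(h_l, h_u)` with
`0 < h_l < 1/2 < h_u < 1` on which the misclassification rate increases after
aggregation: `ε(h) > ε_raw` for all `h ∈ (h_l, h_u)`. -/
theorem exists_homophily_range_aggErr_gt_rawErr (μ1 μ2 σ : ℝ) (h : μ1 < μ2) (hσ : 0 < σ)
    (d : ℕ) (hd : 2 ≤ d) :
    ∃ hl hu : ℝ, 0 < hl ∧ hl < 1 / 2 ∧ 1 / 2 < hu ∧ hu < 1 ∧
      ∀ h' : ℝ, hl < h' → h' < hu → aggErr μ1 μ2 σ d h' > rawErr μ1 μ2 σ := by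
  set s := Real.sqrt d with hs
  have hs1 : 1 < s := by
    rw [hs]
    have : (1 : ℝ) < (d : ℝ) := by exact_mod_cast Nat.lt_of_lt_of_le one_lt_two hd
    calc (1 : ℝ) = Real.sqrt 1 := (Real.sqrt_one).symm
      _ < Real.sqrt d := Real.sqrt_lt_sqrt zero_le_one this
  have hspos : 0 < s := lt_trans one_pos hs1
  refine ⟨1 / 2 - 1 / (4 * s), 1 / 2 + 1 / (4 * s), ?_, ?_, ?_, ?_, ?_⟩
  · have : 1 / (4 * s) < 1 / 4 := by
      apply div_lt_div_of_pos_left one_pos (by norm_num) (by linarith)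
    linarith
  · have : 0 < 1 / (4 * s) := by positivity
    linarith
  · have : 0 < 1 / (4 * s) := by positivity
    linarith
  · have : 1 / (4 * s) < 1 / 4 := by
      apply div_lt_div_of_pos_left one_pos (by norm_num) (by linarith)
    linarith
  · intro h' h1 h2
    unfold aggErr rawErr
    have hq : 2 * (1 / (4 * s)) = 1 / (2 * s) := by
      field_simp; ring
    have habs : |2 * h' - 1| < 1 / (2 * s) := by
      rw [abs_lt]
      constructor <;> linarith
    have hq2 : 1 / (2 * s) * s = 1 / 2 := by
      field_simp
    have hkey : |2 * h' - 1| * s < 1 := by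
      have := mul_lt_mul_of_pos_right habs hspos
      rw [hq2] at this
      linarith
    have hμ : 0 < μ2 - μ1 := by linarith
    have harg : -(μ2 - μ1) / (2 * σ) < -(|2 * h' - 1| * s * (μ2 - μ1)) / (2 * σ) := by
      apply div_lt_div_of_pos_right ?_ (by linarith)
      nlinarith [abs_nonneg (2 * h' - 1)]
    have := stdNormalCDF_strictMono harg
    linarith
end
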